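/- Let F be a positive CNF formula with k variables and n ≥ 1 clauses (each clause a nonempty subset of the variables), where k is odd. Then every minimum connected dominating set of G_F contains exactly three vertices from the copy of the graph A. -/

import Mathlib

/-! The copy of `A` is attached to the rest of `G_F` only at `p₁`. A connected dominating set `S`
must dominate `r₂`, so it contains one of `q₂, p₃, r₂`; it also contains a vertex outside `A`, so
by connectivity it contains `p₁`, and the first step of a path from that vertex to `p₁` gives a
third vertex of `A`, since `q₂, p₃, r₂` are not adjacent to `p₁`. Conversely, replacing `S ∩ A`
by `{p₁, p₂, q₂}`, which is connected, contains `p₁` and dominates `A`, gives again a connected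
dominating set; so a minimum one has at most three vertices in `A`. -/

namespace CDG

/-- Vertices of the graph `B`. -/
inductive BVert : Type
  | a | e | b | b' | h | k | f1 | g1 | f2 | g2

/-- The edges of the graph `B`. -/
def BRel : BVert → BVert → Prop
  | .a, .e => True
  | .e, .b => True
  | .b, .b' => True
  | .a, .h => True
  | .h, .e => True
  | .e, .f1 => True
  | .f1, .b => True
  | .b, .f2 => True
  | .f2, .e => True
  | .e, .g1 => True
  | .g1, .f1 => True
  | .e, .g2 => True
  | .g2, .f2 => True
  | .h, .k => True
  | .k, .a => True
  | _, _ => False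

/-- The graph `B`. -/
def graphB : SimpleGraph BVert := SimpleGraph.fromRel BRel

/-- `S` is a connected dominating set of `G`: every vertex is in `S` or adjacent to a
vertex of `S`, and the subgraph induced by `S` is connected. -/
def IsConnDomSet {V : Type*} (G : SimpleGraph V) (S : Set V) : Prop :=
  (∀ v : V, v ∈ S ∨ ∃ u ∈ S, G.Adj u v) ∧ (G.induce S).Connected

/-- The connected domination number of `G`. -/
noncomputable def connDomNum {V : Type*} (G : SimpleGraph V) : ℕ :=
  sInf {m | ∃ S : Set V, IsConnDomSet G S ∧ S.ncard = m}

/-- Vertices of the graph `H n`: `u i` is `u_i` for `0 ≤ i ≤ n+1`, `x t` is `x_{t+1}` and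
`y t` is `y_{t+1}` for `0 ≤ t ≤ n-2`. -/
inductive HVert (n : ℕ) : Type
  | u : Fin (n + 2) → HVert n
  | x : Fin (n - 1) → HVert n
  | y : Fin (n - 1) → HVert n

/-- The edges of the graph `H n`. -/
def HRel (n : ℕ) : HVert n → HVert n → Prop
  | .u i, .u j => (j : ℕ) = (i : ℕ) + 1
  | .u i, .x t => (i : ℕ) = (t : ℕ) + 1 ∨ (i : ℕ) = (t : ℕ) + 2
  | .x t, .y s => t = s
  | .y s, .u i => (i : ℕ) = (s : ℕ) + 2
  | _, _ => False

/-- The graph `H n`. -/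
def graphH (n : ℕ) : SimpleGraph (HVert n) := SimpleGraph.fromRel (HRel n)

/-- Vertices of the graph `C m`: `cc i` is `c^{i+1}` and `dd i` is `d^{i+1}` for `0 ≤ i ≤ m-1`. -/
inductive CVert (m : ℕ) : Type
  | c : CVert m
  | d : CVert m
  | cc : Fin m → CVert m
  | dd : Fin m → CVert m

/-- The edges of the graph `C m`. -/
def CRel (m : ℕ) : CVert m → CVert m → Prop
  | .c, .d => True
  | .c, .dd _ => True
  | .cc i, .dd j => i = j
  | _, _ => False

/-- The graph `C m`. -/
def graphC (m : ℕ) : SimpleGraph (CVert m) := SimpleGraph.fromRel (CRel m)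

/-- Vertices of the graph `A`. -/
inductive AVert : Type
  | p1 | p2 | p3 | q1 | q2 | r1 | r2

/-- The edges of the graph `A`. -/
def ARel : AVert → AVert → Prop
  | .p1, .p2 => True
  | .p2, .p3 => True
  | .p1, .q1 => True
  | .q1, .r1 => True
  | .p2, .q1 => True
  | .p2, .r1 => True
  | .p2, .q2 => True
  | .q2, .r2 => True
  | .p3, .q2 => True
  | .p3, .r2 => True
  | _, _ => False

/-- Vertices of the graph `G_F`, for a formula with `k` variables and `n` clauses:
`k` copies of `B`, `n` copies of `C n`, one copy of `H (2n+7)`, and a copy of `A`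
exactly when `k` is odd (realized as `AVert × Fin (k % 2)`). -/
abbrev GVert (k n : ℕ) : Type :=
  (Fin k × BVert) ⊕ (Fin n × CVert n) ⊕ HVert (2 * n + 7) ⊕ (AVert × Fin (k % 2))

/-- The edges of the graph `G_F`, where the formula `F` assigns to each clause `j`
the (nonempty) set of variables appearing in it. -/
def GRel (k n : ℕ) (F : Fin n → Finset (Fin k)) : GVert k n → GVert k n → Prop
  | .inl (i, v), .inl (i', w) => i = i' ∧ BRel v w
  | .inr (.inl (j, v)), .inr (.inl (j', w)) => j = j' ∧ CRel n v w
  | .inr (.inr (.inl v)), .inr (.inr (.inl w)) => HRel (2 * n + 7) v w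
  | .inr (.inr (.inr (v, _))), .inr (.inr (.inr (w, _))) => ARel v w
  | .inr (.inl (j, v)), .inl (i, w) =>
      i ∈ F j ∧ w = .a ∧ (v = .c ∨ ∃ t, v = .cc t)
  | .inr (.inr (.inl v)), .inl (i, w) =>
      v = .u ⟨0, by omega⟩ ∧ (w = .a ∨ w = .b)
  | .inr (.inr (.inr (v, _))), .inr (.inr (.inl w)) =>
      v = .p1 ∧ w = .u ⟨0, by omega⟩
  | _, _ => False

/-- The graph `G_F`. -/
def graphGF (k n : ℕ) (F : Fin n → Finset (Fin k)) : SimpleGraph (GVert k n) :=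
  SimpleGraph.fromRel (GRel k n F)

/-- Vertices of the graph `G'_F`, for a formula with `k` variables and `n` clauses:
`k` copies of `B`, `n` copies of `C n`, one copy of `H 6`, and a copy of `A`
exactly when `k` is odd (realized as `AVert × Fin (k % 2)`). -/
abbrev GVert' (k n : ℕ) : Type :=
  (Fin k × BVert) ⊕ (Fin n × CVert n) ⊕ HVert 6 ⊕ (AVert × Fin (k % 2))

/-- The edges of the graph `G'_F`. -/
def GRel' (k n : ℕ) (F : Fin n → Finset (Fin k)) : GVert' k n → GVert' k n → Prop
  | .inl (i, v), .inl (i', w) => i = i' ∧ BRel v w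
  | .inr (.inl (j, v)), .inr (.inl (j', w)) => j = j' ∧ CRel n v w
  | .inr (.inr (.inl v)), .inr (.inr (.inl w)) => HRel 6 v w
  | .inr (.inr (.inr (v, _))), .inr (.inr (.inr (w, _))) => ARel v w
  | .inr (.inl (j, v)), .inl (i, w) =>
      i ∈ F j ∧ w = .a ∧ (v = .c ∨ ∃ t, v = .cc t)
  | .inr (.inr (.inl v)), .inl (i, w) =>
      v = .u ⟨7, by omega⟩ ∧ (w = .a ∨ w = .b)
  | .inr (.inr (.inr (v, _))), .inr (.inr (.inl w)) =>
      v = .p1 ∧ w = .u ⟨7, by omega⟩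
  | _, _ => False

/-- The graph `G'_F`. -/
def graphGF' (k n : ℕ) (F : Fin n → Finset (Fin k)) : SimpleGraph (GVert' k n) :=
  SimpleGraph.fromRel (GRel' k n F)

end CDG

namespace SimpleGraph

variable {V W : Type*} {G : SimpleGraph V} {H : SimpleGraph W}

theorem Preconnected.of_surjective_of_adj_reachable (hG : G.Preconnected) (f : V → W)
    (hf : Function.Surjective f) (hadj : ∀ u v, G.Adj u v → H.Reachable (f u) (f v)) :
    H.Preconnected := by
  intro a b
  obtain ⟨u, rfl⟩ := hf a
  obtain ⟨v, rfl⟩ := hf b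
  simp only [reachable_iff_reflTransGen] at hadj ⊢
  exact Relation.ReflTransGen.lift' f hadj u v ((reachable_iff_reflTransGen u v).mp (hG u v))

theorem exists_adj_of_induce_preconnected {S : Set V} (hS : (G.induce S).Preconnected)
    {x y : V} (hx : x ∈ S) (hy : y ∈ S) (hxy : x ≠ y) : ∃ c ∈ S, G.Adj x c := by
  obtain ⟨w⟩ := hS ⟨x, hx⟩ ⟨y, hy⟩
  have hnil : ¬ w.Nil := Walk.not_nil_of_ne (by simpa using hxy)
  exact ⟨_, (w.getVert 1).2, w.adj_snd hnil⟩

end SimpleGraph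

namespace CDG

open SimpleGraph

variable {V : Type*} {G : SimpleGraph V} {A S T : Set V} {p : V}

def IsGate (G : SimpleGraph V) (A : Set V) (p : V) : Prop :=
  ∀ ⦃a y⦄, a ∈ A → y ∉ A → G.Adj a y → a = p

def Dominates (G : SimpleGraph V) (T A : Set V) : Prop :=
  ∀ a ∈ A, a ∈ T ∨ ∃ t ∈ T, G.Adj t a

namespace IsGate

theorem mem_of_preconnected (hA : IsGate G A p) (hS : (G.induce S).Preconnected)
    {x y : V} (hx : x ∈ S) (hxA : x ∈ A) (hy : y ∈ S) (hyA : y ∉ A) : p ∈ S := by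
  obtain ⟨w⟩ := hS ⟨x, hx⟩ ⟨y, hy⟩
  obtain ⟨d, -, hd₁, hd₂⟩ := w.exists_boundary_dart (Subtype.val ⁻¹' A) hxA hyA
  rw [← hA hd₁ hd₂ d.adj]
  exact d.fst.2

theorem preconnected_insert_diff (hA : IsGate G A p) (hS : (G.induce S).Preconnected)
    (hp : p ∈ S) : (G.induce (insert p (S \ A))).Preconnected := by
  classical
  let f : S → ↥(insert p (S \ A)) := fun x =>
    if hx : x.1 ∈ A then ⟨p, Set.mem_insert _ _⟩ else ⟨x, Or.inr ⟨x.2, hx⟩⟩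
  have hfix : ∀ x : S, (x.1 ∈ A → x.1 = p) → (f x).1 = x.1 := by
    intro x hx
    by_cases hxA : x.1 ∈ A
    · simp only [f, dif_pos hxA]
      exact (hx hxA).symm
    · simp [f, hxA]
  have hf : Function.Surjective f := by
    rintro ⟨y, hy | ⟨hy, hyA⟩⟩
    · exact ⟨⟨p, hp⟩, Subtype.ext ((hfix _ fun _ => rfl).trans hy.symm)⟩
    · exact ⟨⟨y, hy⟩, Subtype.ext (hfix _ fun h => absurd h hyA)⟩
  refine hS.of_surjective_of_adj_reachable f hf fun u v huv => ?_
  have hadj (hu : u.1 ∈ A → u.1 = p) (hv : v.1 ∈ A → v.1 = p) :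
      (G.induce (insert p (S \ A))).Reachable (f u) (f v) := by
    refine Adj.reachable ?_
    change G.Adj (f u).1 (f v).1
    rw [hfix u hu, hfix v hv]
    exact huv
  by_cases huA : u.1 ∈ A <;> by_cases hvA : v.1 ∈ A
  · simp [f, huA, hvA]
  · exact hadj (fun _ => hA huA hvA huv) (absurd · hvA)
  · exact hadj (absurd · huA) (fun _ => hA hvA huA huv.symm)
  · exact hadj (absurd · huA) (absurd · hvA)

theorem dominating_diff_union (hA : IsGate G A p) (hS : ∀ v, v ∈ S ∨ ∃ u ∈ S, G.Adj u v)
    (hpT : p ∈ T) (hTA : Dominates G T A) :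
    ∀ v, v ∈ S \ A ∪ T ∨ ∃ u ∈ S \ A ∪ T, G.Adj u v := by
  intro v
  by_cases hvA : v ∈ A
  · rcases hTA v hvA with hv | ⟨u, hu, huv⟩
    · exact Or.inl (Or.inr hv)
    · exact Or.inr ⟨u, Or.inr hu, huv⟩
  rcases hS v with hv | ⟨u, hu, huv⟩
  · exact Or.inl (Or.inl ⟨hv, hvA⟩)
  by_cases huA : u ∈ A
  · exact Or.inr ⟨p, Or.inr hpT, hA huA hvA huv ▸ huv⟩
  · exact Or.inr ⟨u, Or.inl ⟨hu, huA⟩, huv⟩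

theorem isConnDomSet_diff_union (hA : IsGate G A p) (hS : IsConnDomSet G S) (hpS : p ∈ S)
    (hT : (G.induce T).Preconnected) (hpT : p ∈ T) (hTA : Dominates G T A) :
    IsConnDomSet G (S \ A ∪ T) := by
  refine ⟨hA.dominating_diff_union hS.1 hpT hTA, ?_⟩
  have := induce_union_connected (hA.preconnected_insert_diff hS.2.preconnected hpS) hT
    ⟨p, Set.mem_insert _ _, hpT⟩
  rwa [Set.insert_union, Set.insert_eq_of_mem (Set.mem_union_right _ hpT)] at this

theorem ncard_inter_le [Finite V] (hA : IsGate G A p) (hS : IsConnDomSet G S)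
    (hmin : S.ncard = connDomNum G) (hpS : p ∈ S) (hT : (G.induce T).Preconnected)
    (hpT : p ∈ T) (hTA : Dominates G T A) : (S ∩ A).ncard ≤ T.ncard := by
  have hsplit := Set.ncard_inter_add_ncard_sdiff_eq_ncard S A (Set.toFinite S)
  have hle : connDomNum G ≤ (S \ A ∪ T).ncard :=
    Nat.sInf_le ⟨_, hA.isConnDomSet_diff_union hS hpS hT hpT hTA, rfl⟩
  have := Set.ncard_union_le (S \ A) T
  omega

end IsGate

deriving instance DecidableEq for AVert

instance : Fintype AVert :=
  Fintype.ofList [.p1, .p2, .p3, .q1, .q2, .r1, .r2] (by intro x; cases x <;> simp)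

deriving instance DecidableEq for BVert

instance : Fintype BVert :=
  Fintype.ofList [.a, .e, .b, .b', .h, .k, .f1, .g1, .f2, .g2] (by intro x; cases x <;> simp)

deriving instance Fintype for CVert
deriving instance Fintype for HVert

instance : DecidableRel ARel := fun v w => by
  cases v <;> cases w <;> simp only [ARel] <;> infer_instance

def graphA : SimpleGraph AVert := SimpleGraph.fromRel ARel

instance : DecidableRel graphA.Adj := fun v w =>
  inferInstanceAs (Decidable (v ≠ w ∧ (ARel v w ∨ ARel w v)))

theorem graphA_adj_p1_iff {w : AVert} : graphA.Adj .p1 w ↔ w = .p2 ∨ w = .q1 := by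
  revert w; decide

theorem graphA_adj_r2_iff {w : AVert} : graphA.Adj w .r2 ↔ w = .q2 ∨ w = .p3 := by
  revert w; decide

section CopyOfA

variable {k n : ℕ} {F : Fin n → Finset (Fin k)} {S : Set (GVert k n)}

instance : Subsingleton (Fin (k % 2)) :=
  ⟨fun s t => Fin.ext (by have := s.isLt; have := t.isLt; omega)⟩

def inA (t : Fin (k % 2)) (w : AVert) : GVert k n := .inr (.inr (.inr (w, t)))

def copyA (k n : ℕ) : Set (GVert k n) := {v | ∃ (w : AVert) (t : Fin (k % 2)), v = inA t w}

theorem inA_injective (t : Fin (k % 2)) : Function.Injective (inA t : AVert → GVert k n) := by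
  intro v w h
  simpa [inA] using h

theorem inA_mem_copyA (t : Fin (k % 2)) (w : AVert) : (inA t w : GVert k n) ∈ copyA k n :=
  ⟨w, t, rfl⟩

theorem adj_inA_inA {t t' : Fin (k % 2)} {v w : AVert} :
    (graphGF k n F).Adj (inA t v) (inA t' w) ↔ graphA.Adj v w := by
  rw [Subsingleton.elim t' t]
  simp [graphGF, graphA, inA, GRel]

theorem isGate_copyA (t : Fin (k % 2)) :
    IsGate (graphGF k n F) (copyA k n) (inA t .p1) := by
  rintro _ y ⟨w, t', rfl⟩ hy h
  rw [Subsingleton.elim t' t]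
  rcases y with _ | _ | _ | ⟨w', t''⟩
  · simp [graphGF, GRel, inA] at h
  · simp [graphGF, GRel, inA] at h
  · simp [graphGF, GRel, inA] at h
    rw [h.1]
  · exact absurd ⟨w', t'', rfl⟩ hy

theorem exists_eq_inA_of_adj {t : Fin (k % 2)} {v : AVert} {y : GVert k n} (hv : v ≠ .p1)
    (h : (graphGF k n F).Adj (inA t v) y) : ∃ w, y = inA t w ∧ graphA.Adj v w := by
  by_cases hy : y ∈ copyA k n
  · obtain ⟨w, t', rfl⟩ := hy
    rw [Subsingleton.elim t' t] at h ⊢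
    exact ⟨w, rfl, adj_inA_inA.mp h⟩
  · exact absurd ((inA_injective t) ((isGate_copyA t) (inA_mem_copyA t v) hy h)) hv

theorem exists_mem_not_mem_copyA (hS : ∀ v, v ∈ S ∨ ∃ u ∈ S, (graphGF k n F).Adj u v) :
    ∃ y ∈ S, y ∉ copyA k n := by
  -- unlike `u 0`, the vertex `u 1` has no neighbour in the copy of `A`
  let y₀ : GVert k n := .inr (.inr (.inl (.u 1)))
  have hy₀ : y₀ ∉ copyA k n := by simp [y₀, copyA, inA]
  rcases hS y₀ with h | ⟨u, hu, huy⟩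
  · exact ⟨y₀, h, hy₀⟩
  refine ⟨u, hu, ?_⟩
  rintro ⟨w, t, rfl⟩
  simp [y₀, graphGF, GRel, inA] at huy

theorem exists_inA_mem_of_dominating (hS : ∀ v, v ∈ S ∨ ∃ u ∈ S, (graphGF k n F).Adj u v)
    (t : Fin (k % 2)) : ∃ z, inA t z ∈ S ∧ (z = .r2 ∨ z = .q2 ∨ z = .p3) := by
  rcases hS (inA t .r2) with h | ⟨u, hu, hur⟩
  · exact ⟨.r2, h, Or.inl rfl⟩
  obtain ⟨w, rfl, hw⟩ := exists_eq_inA_of_adj (by decide) hur.symm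
  exact ⟨w, hu, Or.inr (graphA_adj_r2_iff.mp hw.symm)⟩

theorem inA_p1_mem (hS : IsConnDomSet (graphGF k n F) S) (t : Fin (k % 2)) :
    inA t .p1 ∈ S := by
  obtain ⟨y, hyS, hyA⟩ := exists_mem_not_mem_copyA hS.1
  obtain ⟨z, hzS, -⟩ := exists_inA_mem_of_dominating hS.1 t
  exact (isGate_copyA t).mem_of_preconnected hS.2.preconnected hzS (inA_mem_copyA t z) hyS hyA

theorem three_le_ncard_inter_copyA (hS : IsConnDomSet (graphGF k n F) S) (t : Fin (k % 2)) :
    3 ≤ (S ∩ copyA k n).ncard := by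
  obtain ⟨z, hzS, hz⟩ := exists_inA_mem_of_dominating hS.1 t
  have hp := inA_p1_mem hS t
  have hzp : z ≠ .p1 := by rcases hz with rfl | rfl | rfl <;> decide
  obtain ⟨c, hcS, hzc⟩ := exists_adj_of_induce_preconnected hS.2.preconnected hzS hp
    ((inA_injective t).ne hzp)
  obtain ⟨w, rfl, hzw⟩ := exists_eq_inA_of_adj hzp hzc
  have hwp : w ≠ .p1 := by
    rintro rfl
    have := graphA_adj_p1_iff.mp hzw.symm
    rcases hz with rfl | rfl | rfl <;> simp at this
  have hsub : {inA t .p1, inA t z, inA t w} ⊆ S ∩ copyA k n := by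
    rintro _ (rfl | rfl | rfl)
    exacts [⟨hp, inA_mem_copyA t _⟩, ⟨hzS, inA_mem_copyA t _⟩, ⟨hcS, inA_mem_copyA t _⟩]
  have hcard : ({inA t .p1, inA t z, inA t w} : Set (GVert k n)).ncard = 3 :=
    Set.ncard_eq_three.mpr ⟨_, _, _, (inA_injective t).ne hzp.symm,
      (inA_injective t).ne hwp.symm, (inA_injective t).ne hzw.ne, rfl⟩
  exact hcard ▸ Set.ncard_le_ncard hsub (Set.toFinite _)

def tripleA (t : Fin (k % 2)) : Set (GVert k n) := {inA t .p1, inA t .p2, inA t .q2}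

theorem ncard_tripleA (t : Fin (k % 2)) : (tripleA t : Set (GVert k n)).ncard = 3 :=
  Set.ncard_eq_three.mpr ⟨_, _, _, by simp [inA], by simp [inA], by simp [inA], rfl⟩

theorem induce_tripleA_connected (t : Fin (k % 2)) :
    ((graphGF k n F).induce (tripleA t)).Connected := by
  rw [tripleA, ← Set.singleton_union]
  exact connected_induce_union Preconnected.of_subsingleton
    (induce_pair_connected_of_adj (adj_inA_inA.mpr (by decide))).preconnected rfl
    (Set.mem_insert _ _) (adj_inA_inA.mpr (by decide))

theorem dominates_tripleA (t : Fin (k % 2)) :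
    Dominates (graphGF k n F) (tripleA t) (copyA k n) := by
  rintro _ ⟨w, t', rfl⟩
  rw [Subsingleton.elim t' t]
  simp only [tripleA, Set.mem_insert_iff, Set.mem_singleton_iff, exists_eq_or_imp,
    exists_eq_left, adj_inA_inA, (inA_injective t).eq_iff]
  cases w <;> decide

end CopyOfA

theorem min_connDomSet_three_in_A_of_odd_general (k n : ℕ) (hkodd : Odd k)
    (F : Fin n → Finset (Fin k))
    (S : Set (GVert k n)) (hS : IsConnDomSet (graphGF k n F) S)
    (hmin : S.ncard = connDomNum (graphGF k n F)) :
    (S ∩ {v : GVert k n |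
      ∃ (w : AVert) (t : Fin (k % 2)), v = .inr (.inr (.inr (w, t)))}).ncard = 3 := by
  have t : Fin (k % 2) := ⟨0, by rw [Nat.odd_iff.mp hkodd]; exact Nat.one_pos⟩
  change (S ∩ copyA k n).ncard = 3
  refine le_antisymm ?_ (three_le_ncard_inter_copyA hS t)
  calc (S ∩ copyA k n).ncard
      ≤ (tripleA t).ncard := (isGate_copyA t).ncard_inter_le hS hmin (inA_p1_mem hS t)
        (induce_tripleA_connected t).preconnected (Set.mem_insert _ _) (dominates_tripleA t)
    _ = 3 := ncard_tripleA t

theorem min_connDomSet_three_in_A_of_odd (k n : ℕ) (hkodd : Odd k) (hn : 1 ≤ n)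
    (F : Fin n → Finset (Fin k)) (hF : ∀ j, (F j).Nonempty)
    (S : Set (GVert k n)) (hS : IsConnDomSet (graphGF k n F) S)
    (hmin : S.ncard = connDomNum (graphGF k n F)) :
    (S ∩ {v : GVert k n |
      ∃ (w : AVert) (t : Fin (k % 2)), v = .inr (.inr (.inr (w, t)))}).ncard = 3 :=
  min_connDomSet_three_in_A_of_odd_general k n hkodd F S hS hmin

end CDG
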